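/- Let β₁ < 0 < β₂ < β₃ be real numbers satisfying β₁β₂ + β₁β₃ + β₂β₃ = 0, and set ω = (2/3)(β₁ + β₂ + β₃) and k ∈ (0,1) with k² = (β₃ − β₂)/(β₃ − β₁). Suppose ψ : ℝ → ℝ is a C² function satisfying ψ''(x) − ωψ(x) + ψ(x)² = 0 for all x, with ψ(0) = β₃ and ψ'(0) = 0. Then β₂ ≤ ψ(x) ≤ β₃ for all x ∈ ℝ, and ψ is periodic with fundamental (least positive) period T = 2√6 · K(k) / √(β₃ − β₁). -/

import Mathlib

/-- The complete elliptic integral of the first kind,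
`K(k) = ∫₀¹ dt / √((1 − t²)(1 − k²t²))`. -/
noncomputable def ellipticK (k : ℝ) : ℝ :=
  ∫ t in (0 : ℝ)..1, 1 / Real.sqrt ((1 - t ^ 2) * (1 - k ^ 2 * t ^ 2))


open Set MeasureTheory intervalIntegral


noncomputable def Gcn (a b c : ℝ) (y : ℝ) : ℝ := 2/3 * ((y - a) * ((y - b) * (c - y)))

noncomputable def gIn (a b c : ℝ) (u : ℝ) : ℝ := (Real.sqrt (Gcn a b c u))⁻¹

noncomputable def Fn (a b c : ℝ) (y : ℝ) : ℝ := ∫ u in y..c, gIn a b c u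

section CN
variable {a b c ω k : ℝ} {ψ : ℝ → ℝ}

lemma hasDerivAt_Gcn (hsum : a * b + a * c + b * c = 0)
    (hω : ω = 2 / 3 * (a + b + c)) (y : ℝ) :
    HasDerivAt (Gcn a b c) (2*ω*y - 2*y^2) y := by
  have h1 : HasDerivAt (fun y : ℝ => 2/3*((y - a) * ((y - b) * (c - y))))
      (2/3*(1*((y - b) * (c - y)) + (y - a) * (1*(c - y) + (y - b)*(0-1)))) y := by
    exact (((hasDerivAt_id y).sub_const a).mul
      (((hasDerivAt_id y).sub_const b).mul ((hasDerivAt_const y c).sub (hasDerivAt_id y)))).const_mul _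
  unfold Gcn
  convert h1 using 1
  linear_combination (2*y)*hω + (2/3)*hsum

lemma dpsi1 (hψ : ContDiff ℝ 2 ψ) : Differentiable ℝ ψ := hψ.differentiable (by norm_num)

lemma dpsi2 (hψ : ContDiff ℝ 2 ψ) : ContDiff ℝ 1 (deriv ψ) := by
  have h : ContDiff ℝ ((1 + 1 : ℕ) : ℕ) ψ := by exact_mod_cast hψ
  simpa using h.iterate_deriv' 1 1

lemma energy (hψ : ContDiff ℝ 2 ψ)
    (hode : ∀ x, deriv (deriv ψ) x - ω * ψ x + ψ x ^ 2 = 0)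
    (h0 : ψ 0 = c) (h0' : deriv ψ 0 = 0)
    (hsum : a * b + a * c + b * c = 0) (hω : ω = 2 / 3 * (a + b + c)) :
    ∀ x, (deriv ψ x)^2 = Gcn a b c (ψ x) := by
  set e : ℝ → ℝ := fun x => (deriv ψ x)^2 - Gcn a b c (ψ x) with he
  have hd2 := (dpsi2 hψ).differentiable one_ne_zero
  have hd1 := dpsi1 hψ
  have hder : ∀ x, HasDerivAt e 0 x := by
    intro x
    have h1 : HasDerivAt (fun x => (deriv ψ x)^2) (2 * deriv ψ x * deriv (deriv ψ) x) x := by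
      simpa [mul_comm, mul_assoc] using ((hd2 x).hasDerivAt.fun_pow 2)
    have h2 : HasDerivAt (fun x => Gcn a b c (ψ x))
        ((2*ω*(ψ x) - 2*(ψ x)^2) * deriv ψ x) x :=
      (hasDerivAt_Gcn hsum hω (ψ x)).comp x (hd1 x).hasDerivAt
    have := h1.fun_sub h2
    refine this.congr_deriv ?_
    have hx := hode x
    linear_combination (2 * deriv ψ x) * hx
  have hconst : ∀ x, e x = e 0 := by
    intro x
    have : Differentiable ℝ e := fun x => (hder x).differentiableAt
    exact is_const_of_deriv_eq_zero this (fun x => (hder x).deriv) x 0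
  intro x
  have h0e : e 0 = 0 := by simp [he, h0, h0', Gcn]
  have := hconst x
  rw [h0e] at this
  simpa [he, sub_eq_zero] using this

lemma bounds (h₁ : a < 0) (h₂ : 0 < b) (h₃ : b < c)
    (hψc : Continuous ψ) (h0 : ψ 0 = c)
    (hE : ∀ x, (deriv ψ x)^2 = Gcn a b c (ψ x)) :
    ∀ x, b ≤ ψ x ∧ ψ x ≤ c := by
  have hG : ∀ x, 0 ≤ Gcn a b c (ψ x) := fun x => (hE x) ▸ sq_nonneg _
  intro x
  have hup : ∀ y, ψ y ≤ c := by
    intro y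
    by_contra hy
    push_neg at hy
    have := hG y
    simp only [Gcn] at this
    have h1 : 0 < ψ y - a := by linarith
    have h2 : 0 < ψ y - b := by linarith
    have h3 : c - ψ y < 0 := by linarith
    nlinarith [mul_neg_of_pos_of_neg h1 (mul_neg_of_pos_of_neg h2 h3)]
  refine ⟨?_, hup x⟩
  by_contra hx
  push_neg at hx
  -- then ψ x ≤ a
  have hxa : ψ x ≤ a := by
    by_contra hxa
    push_neg at hxa
    have := hG x
    simp only [Gcn] at this
    have h1 : 0 < ψ x - a := by linarith
    have h2 : ψ x - b < 0 := by linarith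
    have h3 : 0 < c - ψ x := by linarith
    nlinarith [mul_neg_of_pos_of_neg h1 (mul_neg_of_neg_of_pos h2 h3)]
  -- intermediate value to reach (a+b)/2
  set m : ℝ := (a + b)/2 with hm
  have hmem : m ∈ uIcc (ψ x) (ψ 0) := by
    rw [h0]
    constructor
    · calc min (ψ x) c ≤ ψ x := min_le_left _ _
      _ ≤ m := by simp [hm]; linarith
    · calc m ≤ c := by simp [hm]; linarith
      _ ≤ max (ψ x) c := le_max_right _ _
  obtain ⟨z, _, hz⟩ := intermediate_value_uIcc (hψc.continuousOn (s := uIcc x 0)) hmem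
  have := hG z
  simp only [Gcn] at this
  rw [hz] at this
  have h1 : 0 < m - a := by simp [hm]; linarith
  have h2 : m - b < 0 := by simp [hm]; linarith
  have h3 : 0 < c - m := by simp [hm]; linarith
  nlinarith [mul_neg_of_pos_of_neg h1 (mul_neg_of_neg_of_pos h2 h3)]


noncomputable def helln (k : ℝ) (t : ℝ) : ℝ := 1 / Real.sqrt ((1 - t ^ 2) * (1 - k ^ 2 * t ^ 2))

lemma helln_meas (k : ℝ) : Measurable (helln k) := by
  apply Measurable.div measurable_const
  exact (Real.continuous_sqrt.comp (by continuity)).measurable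

lemma helln_integrable (hk : k ∈ Set.Ioo (0:ℝ) 1) : IntegrableOn (helln k) (Ioc 0 1) := by
  obtain ⟨hk0, hk1⟩ := hk
  have hm : (0:ℝ) < 1 - k^2 := by nlinarith
  set C : ℝ := (Real.sqrt (1 - k^2))⁻¹ with hC
  have hg : IntegrableOn (fun t : ℝ => C * (1 - t) ^ (-(1/2) : ℝ)) (Ioc 0 1) := by
    have h1 : IntervalIntegrable (fun x : ℝ => x ^ (-(1/2) : ℝ)) volume 0 1 :=
      intervalIntegrable_rpow' (by norm_num)
    have h2 := (h1.comp_sub_left 1).symm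
    norm_num at h2
    exact ((intervalIntegrable_iff_integrableOn_Ioc_of_le (by norm_num)).mp h2).const_mul C
  apply Integrable.mono' hg ((helln_meas k).aestronglyMeasurable)
  rw [ae_restrict_iff' measurableSet_Ioc]
  filter_upwards with t ht
  obtain ⟨ht0, ht1⟩ := ht
  have h1t : 0 ≤ 1 - t := by linarith
  have hb1 : 1 - t ≤ 1 - t^2 := by nlinarith
  have hb2 : 1 - k^2 ≤ 1 - k^2 * t^2 := by nlinarith
  have hprod : (1 - t) * (1 - k^2) ≤ (1 - t^2) * (1 - k^2 * t^2) := by nlinarith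
  have hnn : (0:ℝ) ≤ helln k t := by
    unfold helln; positivity
  rw [Real.norm_of_nonneg hnn]
  unfold helln
  rw [Real.rpow_neg h1t, ← Real.sqrt_eq_rpow]
  rcases eq_or_lt_of_le h1t with h | h
  · have ht' : t = 1 := by linarith
    subst ht'
    norm_num
  · have hs1 : Real.sqrt ((1-t)*(1-k^2)) ≤ Real.sqrt ((1 - t^2)*(1 - k^2*t^2)) :=
      Real.sqrt_le_sqrt hprod
    have hp : 0 < Real.sqrt ((1-t)*(1-k^2)) := Real.sqrt_pos.mpr (by positivity)
    have : 1 / Real.sqrt ((1 - t^2)*(1 - k^2*t^2)) ≤ 1 / Real.sqrt ((1-t)*(1-k^2)) :=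
      one_div_le_one_div_of_le hp hs1
    refine this.trans (le_of_eq ?_)
    rw [Real.sqrt_mul h1t]
    rw [one_div, mul_inv]
    rw [mul_comm]

lemma sqrt6_sqrt23 : Real.sqrt 6 * Real.sqrt (2/3) = 2 := by
  rw [← Real.sqrt_mul (by norm_num)]
  rw [show (6 : ℝ) * (2/3) = 2^2 by norm_num]
  exact Real.sqrt_sq (by norm_num)

lemma keyval (h₁ : a < 0) (h₂ : 0 < b) (h₃ : b < c)
    (hk : k ∈ Set.Ioo (0:ℝ) 1) (hk2 : k ^ 2 = (c - b) / (c - a))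
    {t : ℝ} (ht : t ∈ Ioo (0:ℝ) 1) :
    |(-(2*(c-b)*t))| * gIn a b c (c - (c-b)*t^2)
      = Real.sqrt 6 * (Real.sqrt (c-a))⁻¹ * helln k t := by
  obtain ⟨ht0, ht1⟩ := ht
  obtain ⟨hk0, hk1⟩ := hk
  have hca : (0:ℝ) < c - a := by linarith
  have hcb : (0:ℝ) < c - b := by linarith
  have hk2' : k^2 * (c - a) = c - b := by
    rw [hk2]; field_simp
  have ht2 : (0:ℝ) < 1 - t^2 := by nlinarith
  have hkt : (0:ℝ) < 1 - k^2*t^2 := by nlinarith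
  have e1 : Gcn a b c (c - (c-b)*t^2)
      = (2/3*(c-a)) * (((c-b)*t)^2 * ((1-t^2)*(1-k^2*t^2))) := by
    simp only [Gcn]
    linear_combination (2/3 * (c-b)^2 * t^4 * (1-t^2)) * hk2'
  have e2 : Real.sqrt (Gcn a b c (c - (c-b)*t^2))
      = (Real.sqrt (2/3) * Real.sqrt (c-a)) * (((c-b)*t) *
        Real.sqrt ((1-t^2)*(1-k^2*t^2))) := by
    rw [e1, Real.sqrt_mul (by positivity : (0:ℝ) ≤ 2/3*(c-a)),
      Real.sqrt_mul (sq_nonneg _), Real.sqrt_sq (by positivity : (0:ℝ) ≤ (c-b)*t),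
      Real.sqrt_mul (by norm_num : (0:ℝ) ≤ 2/3)]
  have habs : |(-(2*(c-b)*t))| = 2*(c-b)*t := by
    rw [abs_neg, abs_of_pos (by positivity)]
  have hsq : (0:ℝ) < Real.sqrt ((1-t^2)*(1-k^2*t^2)) := Real.sqrt_pos.mpr (by positivity)
  have hs23 : (0:ℝ) < Real.sqrt (2/3) := Real.sqrt_pos.mpr (by norm_num)
  have hsca : (0:ℝ) < Real.sqrt (c-a) := Real.sqrt_pos.mpr hca
  rw [habs]
  unfold gIn helln
  rw [e2]
  set S := Real.sqrt ((1-t^2)*(1-k^2*t^2)) with hS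
  set s23 := Real.sqrt (2/3) with hs23d
  set sca := Real.sqrt (c-a) with hscad
  set s6 := Real.sqrt 6 with hs6d
  have hkey : s6 * s23 = 2 := sqrt6_sqrt23
  have h1 : s23 ≠ 0 := ne_of_gt hs23
  have h2 : sca ≠ 0 := ne_of_gt hsca
  have h3 : S ≠ 0 := ne_of_gt hsq
  have h4 : (c-b)*t ≠ 0 := by positivity
  field_simp
  linear_combination (-1) * hkey
lemma phi_hasDeriv (b c : ℝ) (t : ℝ) :
    HasDerivAt (fun t : ℝ => c - (c-b)*t^2) (-(2*(c-b)*t)) t := by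
  have h : HasDerivAt (fun t : ℝ => c - (c-b)*t^2) (0 - (c-b)*(2*t^1)) t :=
    (hasDerivAt_const t c).sub (((hasDerivAt_pow 2 t)).const_mul (c-b))
  convert h using 1
  ring

lemma phi_inj (h₃ : b < c) : InjOn (fun t : ℝ => c - (c-b)*t^2) (Ioo 0 1) := by
  intro x hx y hy hxy
  simp only at hxy
  have hcb : (0:ℝ) < c - b := by linarith
  have h2 : (c-b)*x^2 = (c-b)*y^2 := by linarith
  have h3 : x^2 = y^2 := mul_left_cancel₀ (ne_of_gt hcb) h2
  calc x = Real.sqrt (x^2) := (Real.sqrt_sq hx.1.le).symm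
  _ = Real.sqrt (y^2) := by rw [h3]
  _ = y := Real.sqrt_sq hy.1.le

lemma phi_image (h₃ : b < c) : (fun t : ℝ => c - (c-b)*t^2) '' (Ioo 0 1) = Ioo b c := by
  have hcb : (0:ℝ) < c - b := by linarith
  ext y
  constructor
  · rintro ⟨t, ⟨ht0, ht1⟩, rfl⟩
    dsimp only
    constructor
    · nlinarith [mul_lt_mul_of_pos_left (by nlinarith : t^2 < 1) hcb]
    · nlinarith [mul_pos hcb (pow_pos ht0 2)]
  · rintro ⟨hy1, hy2⟩
    have hnum : (0:ℝ) < c - y := by linarith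
    have harg : (0:ℝ) < (c - y)/(c-b) := div_pos hnum hcb
    refine ⟨Real.sqrt ((c - y)/(c-b)), ⟨?_, ?_⟩, ?_⟩
    · exact Real.sqrt_pos.mpr harg
    · rw [show (1:ℝ) = Real.sqrt 1 by simp]
      apply Real.sqrt_lt_sqrt harg.le
      rw [div_lt_one hcb]; linarith
    · simp only
      rw [Real.sq_sqrt harg.le]
      field_simp
      ring

lemma subst_main (h₁ : a < 0) (h₂ : 0 < b) (h₃ : b < c)
    (hk : k ∈ Set.Ioo (0:ℝ) 1) (hk2 : k ^ 2 = (c - b) / (c - a)) :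
    IntegrableOn (gIn a b c) (Ioo b c) ∧
    ∫ u in Ioo b c, gIn a b c u
      = Real.sqrt 6 * (Real.sqrt (c-a))⁻¹ * ∫ t in Ioc (0:ℝ) 1, helln k t := by
  have hmeas : MeasurableSet (Ioo (0:ℝ) 1) := measurableSet_Ioo
  have hder : ∀ t ∈ Ioo (0:ℝ) 1, HasDerivWithinAt (fun t : ℝ => c - (c-b)*t^2)
      (-(2*(c-b)*t)) (Ioo 0 1) t := fun t _ => (phi_hasDeriv b c t).hasDerivWithinAt
  have hinj := phi_inj h₃
  have himg := phi_image h₃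
  have heq : ∀ t ∈ Ioo (0:ℝ) 1,
      |(-(2*(c-b)*t))| • gIn a b c (c - (c-b)*t^2)
        = Real.sqrt 6 * (Real.sqrt (c-a))⁻¹ * helln k t := by
    intro t ht
    rw [smul_eq_mul]
    exact keyval h₁ h₂ h₃ hk hk2 ht
  constructor
  · rw [← himg]
    rw [integrableOn_image_iff_integrableOn_abs_deriv_smul hmeas hder hinj]
    apply MeasureTheory.Integrable.congr
      (((helln_integrable hk).mono_set Ioo_subset_Ioc_self).const_mul
        (Real.sqrt 6 * (Real.sqrt (c-a))⁻¹))
    filter_upwards [MeasureTheory.ae_restrict_mem hmeas] with t ht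
    exact (heq t ht).symm
  · rw [← himg, integral_image_eq_integral_abs_deriv_smul hmeas hder hinj]
    rw [MeasureTheory.setIntegral_congr_fun hmeas heq]
    rw [MeasureTheory.integral_const_mul]
    rw [← MeasureTheory.integral_Ioc_eq_integral_Ioo]

lemma Gcn_cont (a b c : ℝ) : Continuous (Gcn a b c) := by
  unfold Gcn; continuity

lemma gIn_meas (a b c : ℝ) : Measurable (gIn a b c) :=
  (Real.continuous_sqrt.comp (Gcn_cont a b c)).measurable.inv

lemma gIn_nonneg (a b c u : ℝ) : 0 ≤ gIn a b c u := by
  unfold gIn; positivity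

lemma Gcn_pos (h₁ : a < 0) (h₂ : 0 < b) {y : ℝ} (hy : y ∈ Ioo b c) :
    0 < Gcn a b c y := by
  obtain ⟨hy1, hy2⟩ := hy
  have e1 : 0 < y - a := by linarith
  have e2 : 0 < y - b := by linarith
  have e3 : 0 < c - y := by linarith
  unfold Gcn; positivity

lemma gIn_integrableOn (h₁ : a < 0) (h₂ : 0 < b) (h₃ : b < c)
    (hk : k ∈ Set.Ioo (0:ℝ) 1) (hk2 : k ^ 2 = (c - b) / (c - a)) :
    IntegrableOn (gIn a b c) (Icc b c) := by
  rw [integrableOn_Icc_iff_integrableOn_Ioo]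
  exact (subst_main h₁ h₂ h₃ hk hk2).1

lemma Fn_val (h₁ : a < 0) (h₂ : 0 < b) (h₃ : b < c)
    (hk : k ∈ Set.Ioo (0:ℝ) 1) (hk2 : k ^ 2 = (c - b) / (c - a)) :
    Fn a b c b = Real.sqrt 6 * (Real.sqrt (c-a))⁻¹ * ellipticK k := by
  unfold Fn
  rw [intervalIntegral.integral_of_le h₃.le, MeasureTheory.integral_Ioc_eq_integral_Ioo]
  rw [(subst_main h₁ h₂ h₃ hk hk2).2]
  congr 1
  unfold ellipticK
  rw [intervalIntegral.integral_of_le (by norm_num : (0:ℝ) ≤ 1)]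
  rfl

lemma Fn_cont (h₁ : a < 0) (h₂ : 0 < b) (h₃ : b < c)
    (hk : k ∈ Set.Ioo (0:ℝ) 1) (hk2 : k ^ 2 = (c - b) / (c - a)) :
    ContinuousOn (Fn a b c) (Icc b c) := by
  have hint : IntegrableOn (gIn a b c) (uIcc b c) volume := by
    rw [uIcc_of_le h₃.le]
    exact gIn_integrableOn h₁ h₂ h₃ hk hk2
  have h := continuousOn_primitive_interval_left hint
  rwa [uIcc_of_le h₃.le] at h

lemma Fn_deriv (h₁ : a < 0) (h₂ : 0 < b) (h₃ : b < c)
    (hk : k ∈ Set.Ioo (0:ℝ) 1) (hk2 : k ^ 2 = (c - b) / (c - a))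
    {y : ℝ} (hy : y ∈ Ioo b c) :
    HasDerivAt (Fn a b c) (-(gIn a b c y)) y := by
  have hI : IntervalIntegrable (gIn a b c) volume b c := by
    rw [intervalIntegrable_iff_integrableOn_Icc_of_le h₃.le]
    exact gIn_integrableOn h₁ h₂ h₃ hk hk2
  apply intervalIntegral.integral_hasDerivAt_left
  · apply hI.mono_set
    rw [uIcc_of_le h₃.le, uIcc_of_le hy.2.le]
    exact Icc_subset_Icc hy.1.le le_rfl
  · exact ⟨univ, Filter.univ_mem, (gIn_meas a b c).aestronglyMeasurable⟩
  · have hpos := Gcn_pos h₁ h₂ hy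
    have hsne : Real.sqrt (Gcn a b c y) ≠ 0 := ne_of_gt (Real.sqrt_pos.mpr hpos)
    exact ((Real.continuous_sqrt.comp (Gcn_cont a b c)).continuousAt).inv₀ hsne

lemma Fn_mono (h₁ : a < 0) (h₂ : 0 < b) (h₃ : b < c)
    (hk : k ∈ Set.Ioo (0:ℝ) 1) (hk2 : k ^ 2 = (c - b) / (c - a))
    {y : ℝ} (hy : y ∈ Icc b c) : Fn a b c y ≤ Fn a b c b := by
  have hI : IntervalIntegrable (gIn a b c) volume b c := by
    rw [intervalIntegrable_iff_integrableOn_Icc_of_le h₃.le]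
    exact gIn_integrableOn h₁ h₂ h₃ hk hk2
  have hsplit : Fn a b c b = (∫ u in b..y, gIn a b c u) + Fn a b c y := by
    unfold Fn
    rw [intervalIntegral.integral_add_adjacent_intervals] <;>
    · apply hI.mono_set
      rw [uIcc_of_le h₃.le]
      first
      | (rw [uIcc_of_le hy.1]; exact Icc_subset_Icc le_rfl hy.2)
      | (rw [uIcc_of_le hy.2]; exact Icc_subset_Icc hy.1 le_rfl)
  have hnn : 0 ≤ ∫ u in b..y, gIn a b c u :=
    intervalIntegral.integral_nonneg hy.1 (fun u _ => gIn_nonneg a b c u)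
  linarith [hsplit]

lemma Gcn_b (a b c : ℝ) : Gcn a b c b = 0 := by simp [Gcn]

lemma Gcn_c (a b c : ℝ) : Gcn a b c c = 0 := by simp [Gcn]

lemma psi_mid (h₁ : a < 0) (h₂ : 0 < b) (h₃ : b < c)
    (hb : ∀ x, b ≤ ψ x ∧ ψ x ≤ c)
    (hE : ∀ x, (deriv ψ x)^2 = Gcn a b c (ψ x))
    {t : ℝ} (ht : deriv ψ t ≠ 0) : ψ t ∈ Ioo b c := by
  have hpos : 0 < Gcn a b c (ψ t) := by
    rw [← hE t]
    exact lt_of_le_of_ne (sq_nonneg _) (Ne.symm (pow_ne_zero 2 ht))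
  constructor
  · refine lt_of_le_of_ne (hb t).1 (fun h => ?_)
    rw [← h, Gcn_b] at hpos
    exact lt_irrefl 0 hpos
  · refine lt_of_le_of_ne (hb t).2 (fun h => ?_)
    rw [h, Gcn_c] at hpos
    exact lt_irrefl 0 hpos

lemma core (h₁ : a < 0) (h₂ : 0 < b) (h₃ : b < c)
    (hk : k ∈ Set.Ioo (0:ℝ) 1) (hk2 : k ^ 2 = (c - b) / (c - a))
    (hψ : ContDiff ℝ 2 ψ) (h0 : ψ 0 = c)
    (hb : ∀ x, b ≤ ψ x ∧ ψ x ≤ c)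
    (hE : ∀ x, (deriv ψ x)^2 = Gcn a b c (ψ x))
    {r : ℝ} (hneg : ∀ t ∈ Ioo 0 r, deriv ψ t < 0) :
    ∀ x ∈ Ioo 0 r, Fn a b c (ψ x) = x := by
  have hd1 := dpsi1 hψ
  have hmid : ∀ t ∈ Ioo 0 r, ψ t ∈ Ioo b c :=
    fun t ht => psi_mid h₁ h₂ h₃ hb hE (ne_of_lt (hneg t ht))
  have hder : ∀ t ∈ Ioo 0 r, HasDerivAt (fun x => Fn a b c (ψ x)) 1 t := by
    intro t ht
    have h1 := (Fn_deriv h₁ h₂ h₃ hk hk2 (hmid t ht)).comp t (hd1 t).hasDerivAt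
    have hGpos : 0 < Gcn a b c (ψ t) := Gcn_pos h₁ h₂ (hmid t ht)
    have hsq : Real.sqrt (Gcn a b c (ψ t)) = -(deriv ψ t) := by
      rw [← hE t, Real.sqrt_sq_eq_abs, abs_of_neg (hneg t ht)]
    have : -(gIn a b c (ψ t)) * deriv ψ t = 1 := by
      unfold gIn
      rw [hsq]
      have hne : deriv ψ t ≠ 0 := ne_of_lt (hneg t ht)
      field_simp
    rwa [this] at h1
  have hFc : Continuous (fun t => Fn a b c (ψ t)) := by
    rw [← continuousOn_univ]
    exact (Fn_cont h₁ h₂ h₃ hk hk2).comp hψ.continuous.continuousOn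
      (fun t _ => ⟨(hb t).1, (hb t).2⟩)
  intro x hx
  have hsub : ∀ x₀ ∈ Ioo 0 x, Fn a b c (ψ x) - Fn a b c (ψ x₀) = x - x₀ := by
    intro x₀ hx₀
    have hss : Icc x₀ x ⊆ Ioo 0 r := fun z hz =>
      ⟨lt_of_lt_of_le hx₀.1 hz.1, lt_of_le_of_lt hz.2 hx.2⟩
    have := intervalIntegral.integral_eq_sub_of_hasDerivAt
      (f := fun t => Fn a b c (ψ t)) (f' := fun _ => (1:ℝ)) (a := x₀) (b := x)
      (fun t ht => by
        rw [uIcc_of_le hx₀.2.le] at ht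
        exact hder t (hss ht))
      (intervalIntegrable_const)
    rw [intervalIntegral.integral_const, smul_eq_mul, mul_one] at this
    linarith [this]
  have hFn0 : Fn a b c c = 0 := by
    unfold Fn; exact intervalIntegral.integral_same
  have t1 : Filter.Tendsto (fun x₀ => Fn a b c (ψ x₀)) (nhdsWithin 0 (Ioi 0)) (nhds 0) := by
    have h : Filter.Tendsto (fun x₀ => Fn a b c (ψ x₀)) (nhdsWithin 0 (Ioi 0))
        (nhds (Fn a b c (ψ 0))) :=
      (hFc.tendsto 0).mono_left nhdsWithin_le_nhds
    rwa [h0, hFn0] at h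
  have t2 : Filter.Tendsto (fun x₀ => Fn a b c (ψ x₀)) (nhdsWithin 0 (Ioi 0))
      (nhds (Fn a b c (ψ x) - x)) := by
    have hev : ∀ᶠ x₀ in nhdsWithin 0 (Ioi 0),
        Fn a b c (ψ x₀) = Fn a b c (ψ x) - x + x₀ := by
      filter_upwards [Ioo_mem_nhdsGT hx.1] with x₀ hx₀
      have := hsub x₀ hx₀
      linarith
    rw [show Fn a b c (ψ x) - x = Fn a b c (ψ x) - x + 0 by ring]
    apply Filter.Tendsto.congr' (Filter.EventuallyEq.symm hev)
    exact (tendsto_const_nhds.add (tendsto_nhdsWithin_of_tendsto_nhds Filter.tendsto_id))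
  have := tendsto_nhds_unique t1 t2
  linarith [this]

lemma negstart (h₁ : a < 0) (h₂ : 0 < b) (h₃ : b < c)
    (hψ : ContDiff ℝ 2 ψ)
    (hode : ∀ x, deriv (deriv ψ) x - ω * ψ x + ψ x ^ 2 = 0)
    (h0 : ψ 0 = c) (h0' : deriv ψ 0 = 0)
    (hsum : a * b + a * c + b * c = 0) (hω : ω = 2 / 3 * (a + b + c)) :
    ∃ δ > 0, ∀ t ∈ Ioo 0 δ, deriv ψ t < 0 := by
  obtain ⟨hd2, hc2⟩ := contDiff_one_iff_deriv.mp (dpsi2 hψ)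
  have hval : deriv (deriv ψ) 0 = ω * c - c^2 := by
    have := hode 0
    rw [h0] at this
    linarith
  have hneg0 : deriv (deriv ψ) 0 < 0 := by
    rw [hval]
    have key : ω * c - c^2 = -(1/3) * ((c-a)*(c-b)) := by
      linear_combination c * hω + (1/3) * hsum
    rw [key]
    have : 0 < (c-a)*(c-b) := mul_pos (by linarith) (by linarith)
    linarith
  have hev : ∀ᶠ t in nhds (0:ℝ), deriv (deriv ψ) t < 0 :=
    (hc2.tendsto 0).eventually_lt_const hneg0
  rw [Metric.eventually_nhds_iff] at hev
  obtain ⟨δ, hδ, hball⟩ := hev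
  refine ⟨δ, hδ, fun t ht => ?_⟩
  have hanti : StrictAntiOn (deriv ψ) (Icc 0 δ) := by
    apply strictAntiOn_of_deriv_neg (convex_Icc 0 δ)
      ((dpsi2 hψ).continuous.continuousOn)
    intro x hx
    rw [interior_Icc] at hx
    apply hball
    rw [Real.dist_eq, sub_zero, abs_of_pos hx.1]
    exact hx.2
  have := hanti ⟨le_rfl, hδ.le⟩ ⟨ht.1.le, ht.2.le⟩ ht.1
  rwa [h0'] at this

lemma halfperiod (h₁ : a < 0) (h₂ : 0 < b) (h₃ : b < c)
    (hk : k ∈ Set.Ioo (0:ℝ) 1) (hk2 : k ^ 2 = (c - b) / (c - a))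
    (hψ : ContDiff ℝ 2 ψ)
    (hode : ∀ x, deriv (deriv ψ) x - ω * ψ x + ψ x ^ 2 = 0)
    (h0 : ψ 0 = c) (h0' : deriv ψ 0 = 0)
    (hsum : a * b + a * c + b * c = 0) (hω : ω = 2 / 3 * (a + b + c)) :
    0 < Fn a b c b ∧ ψ (Fn a b c b) = b ∧ deriv ψ (Fn a b c b) = 0 ∧
      (∀ t ∈ Ioo 0 (Fn a b c b), deriv ψ t < 0) := by
  have hE := energy hψ hode h0 h0' hsum hω
  have hb := bounds h₁ h₂ h₃ hψ.continuous h0 hE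
  obtain ⟨δ, hδ, hnegδ⟩ := negstart h₁ h₂ h₃ hψ hode h0 h0' hsum hω
  have hψ'c : Continuous (deriv ψ) := (dpsi2 hψ).continuous
  -- any positive zero of ψ' is ≥ δ
  have hzge : ∀ t, 0 < t → deriv ψ t = 0 → δ ≤ t := by
    intro t ht hz
    by_contra hlt
    push_neg at hlt
    exact absurd hz (ne_of_lt (hnegδ t ⟨ht, hlt⟩))
  -- ψ' < 0 on (0, t) whenever no zero in (0, t]
  have hsign : ∀ t, 0 < t → (∀ z, 0 < z → z ≤ t → deriv ψ z ≠ 0) → deriv ψ t < 0 := by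
    intro t ht hnz
    rcases lt_trichotomy (deriv ψ t) 0 with h | h | h
    · exact h
    · exact absurd h (hnz t ht le_rfl)
    · -- IVT to find a zero
      set s := min (δ/2) (t/2) with hs
      have hs0 : 0 < s := by positivity
      have hst : s ≤ t := le_trans (min_le_right _ _) (by linarith)
      have hsneg : deriv ψ s < 0 := hnegδ s ⟨hs0, lt_of_le_of_lt (min_le_left _ _) (by linarith)⟩
      have hmem : (0:ℝ) ∈ uIcc (deriv ψ s) (deriv ψ t) := by
        rw [mem_uIcc]
        left; exact ⟨hsneg.le, h.le⟩
      obtain ⟨z, hz1, hz2⟩ := intermediate_value_uIcc (hψ'c.continuousOn (s := uIcc s t)) hmem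
      rw [uIcc_of_le hst] at hz1
      exact absurd hz2 (hnz z (lt_of_lt_of_le hs0 hz1.1) hz1.2)
  -- there is a positive zero of ψ'
  have hFnb_nonneg : 0 ≤ Fn a b c b :=
    intervalIntegral.integral_nonneg h₃.le (fun u _ => gIn_nonneg a b c u)
  have hex : ∃ t, 0 < t ∧ deriv ψ t = 0 := by
    by_contra hno
    push_neg at hno
    have hallneg : ∀ t ∈ Ioo (0:ℝ) (Fn a b c b + 1), deriv ψ t < 0 := by
      intro t ht
      exact hsign t ht.1 (fun z hz0 _ => hno z hz0)
    have hcore := core h₁ h₂ h₃ hk hk2 hψ h0 hb hE hallneg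
    have hx : Fn a b c b + 1/2 ∈ Ioo (0:ℝ) (Fn a b c b + 1) := by
      constructor <;> [linarith; linarith]
    have h1 := hcore _ hx
    have h2 := Fn_mono h₁ h₂ h₃ hk hk2
      (y := ψ (Fn a b c b + 1/2)) ⟨(hb _).1, (hb _).2⟩
    rw [h1] at h2
    linarith
  -- x₁ := least positive zero
  set Z : Set ℝ := {x | δ ≤ x ∧ deriv ψ x = 0} with hZ
  have hZne : Z.Nonempty := by
    obtain ⟨t, ht0, htz⟩ := hex
    exact ⟨t, hzge t ht0 htz, htz⟩
  have hZclosed : IsClosed Z :=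
    (isClosed_Ici.preimage continuous_id).inter (isClosed_singleton.preimage hψ'c)
  have hZbdd : BddBelow Z := ⟨δ, fun x hx => hx.1⟩
  set x₁ := sInf Z with hx₁
  have hx₁mem : x₁ ∈ Z := hZclosed.csInf_mem hZne hZbdd
  have hx₁pos : 0 < x₁ := lt_of_lt_of_le hδ hx₁mem.1
  have hx₁z : deriv ψ x₁ = 0 := hx₁mem.2
  have hneg : ∀ t ∈ Ioo 0 x₁, deriv ψ t < 0 := by
    intro t ht
    apply hsign t ht.1
    intro z hz0 hzt hzz
    have : x₁ ≤ z := csInf_le hZbdd ⟨hzge z hz0 hzz, hzz⟩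
    linarith [ht.2]
  have hcore := core h₁ h₂ h₃ hk hk2 hψ h0 hb hE hneg
  -- ψ x₁ = b
  have hGz : Gcn a b c (ψ x₁) = 0 := by rw [← hE x₁, hx₁z]; ring
  have hmidhalf : ψ (x₁/2) ∈ Ioo b c :=
    psi_mid h₁ h₂ h₃ hb hE (ne_of_lt (hneg (x₁/2) ⟨by linarith, by linarith⟩))
  have hlt : ψ x₁ < c := by
    have hanti : StrictAntiOn ψ (Icc (x₁/2) x₁) := by
      apply strictAntiOn_of_deriv_neg (convex_Icc _ _) (hψ.continuous.continuousOn)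
      intro x hx
      rw [interior_Icc] at hx
      exact hneg x ⟨by linarith [hx.1], hx.2⟩
    have := hanti ⟨le_rfl, by linarith⟩ ⟨by linarith, le_rfl⟩ (by linarith)
    linarith [hmidhalf.2]
  have hψx₁ : ψ x₁ = b := by
    have h1 : b ≤ ψ x₁ := (hb x₁).1
    rcases eq_or_lt_of_le h1 with h | h
    · exact h.symm
    · exfalso
      have h2 : 0 < ψ x₁ - a := by linarith
      have h3 : 0 < ψ x₁ - b := by linarith
      have h4 : 0 < c - ψ x₁ := by linarith
      have : 0 < Gcn a b c (ψ x₁) := by unfold Gcn; positivity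
      linarith [hGz]
  -- x₁ = Fn b via limit from the left
  have hFc : Continuous (fun t => Fn a b c (ψ t)) := by
    rw [← continuousOn_univ]
    exact (Fn_cont h₁ h₂ h₃ hk hk2).comp hψ.continuous.continuousOn
      (fun t _ => ⟨(hb t).1, (hb t).2⟩)
  have hx₁F : Fn a b c b = x₁ := by
    have t1 : Filter.Tendsto (fun t => Fn a b c (ψ t)) (nhdsWithin x₁ (Iio x₁))
        (nhds (Fn a b c b)) := by
      have h : Filter.Tendsto (fun t => Fn a b c (ψ t)) (nhdsWithin x₁ (Iio x₁))
          (nhds (Fn a b c (ψ x₁))) := (hFc.tendsto x₁).mono_left nhdsWithin_le_nhds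
      rwa [hψx₁] at h
    have t2 : Filter.Tendsto (fun t => Fn a b c (ψ t)) (nhdsWithin x₁ (Iio x₁))
        (nhds x₁) := by
      have hev : ∀ᶠ t in nhdsWithin x₁ (Iio x₁), Fn a b c (ψ t) = t := by
        filter_upwards [Ioo_mem_nhdsLT hx₁pos] with t ht
        exact hcore t ht
      apply Filter.Tendsto.congr' (Filter.EventuallyEq.symm hev)
      exact tendsto_nhdsWithin_of_tendsto_nhds Filter.tendsto_id
    exact tendsto_nhds_unique t1 t2
  rw [hx₁F]
  exact ⟨hx₁pos, hψx₁, hx₁z, hneg⟩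

lemma reflect (h₁ : a < 0) (h₂ : 0 < b) (h₃ : b < c)
    (hψ : ContDiff ℝ 2 ψ)
    (hode : ∀ x, deriv (deriv ψ) x - ω * ψ x + ψ x ^ 2 = 0)
    (hb : ∀ x, b ≤ ψ x ∧ ψ x ≤ c)
    (hE : ∀ x, (deriv ψ x)^2 = Gcn a b c (ψ x))
    {t₀ : ℝ} (hz : deriv ψ t₀ = 0) :
    ∀ s, ψ (t₀ + s) = ψ (t₀ - s) := by
  have hd1 := dpsi1 hψ
  have hd2 := (dpsi2 hψ).differentiable one_ne_zero
  have hψ'c : Continuous (deriv ψ) := (dpsi2 hψ).continuous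
  set M : ℝ := Real.sqrt (2/3*((c-a)*((c-b)*(c-b)))) with hM
  have hMb : ∀ x, |deriv ψ x| ≤ M := by
    intro x
    rw [← Real.sqrt_sq_eq_abs, hE x, hM]
    apply Real.sqrt_le_sqrt
    have h1 := (hb x).1
    have h2 := (hb x).2
    unfold Gcn
    have e2 : 0 ≤ ψ x - b := by linarith
    have e3 : 0 ≤ c - ψ x := by linarith
    have f1 : ψ x - a ≤ c - a := by linarith
    have f2 : ψ x - b ≤ c - b := by linarith
    have f3 : c - ψ x ≤ c - b := by linarith
    have inner : (ψ x - b)*(c - ψ x) ≤ (c-b)*(c-b) :=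
      mul_le_mul f2 f3 e3 (by linarith)
    have outer : (ψ x - a)*((ψ x - b)*(c - ψ x)) ≤ (c-a)*((c-b)*(c-b)) :=
      mul_le_mul f1 inner (mul_nonneg e2 e3) (by linarith)
    linarith
  set L : NNReal := Real.toNNReal (max 1 (|ω| + 2*c)) with hL
  have hLcoe : (L : ℝ) = max 1 (|ω| + 2*c) := by
    rw [hL, Real.coe_toNNReal]
    have hc : (0:ℝ) < c := lt_trans h₂ h₃
    exact le_trans (by norm_num) (le_max_left _ _)
  set v : ℝ → ℝ × ℝ → ℝ × ℝ := fun _ p => (p.2, ω*p.1 - p.1^2) with hv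
  set K : Set (ℝ × ℝ) := Icc b c ×ˢ Icc (-M) M with hK
  have hlip : ∀ t, LipschitzOnWith L (v t) K := by
    intro t
    rw [lipschitzOnWith_iff_dist_le_mul]
    intro p hp q hq
    obtain ⟨hp1, _⟩ := hp
    obtain ⟨hq1, _⟩ := hq
    simp only [hv, Prod.dist_eq, Real.dist_eq]
    apply max_le
    · calc |p.2 - q.2| ≤ max |p.1 - q.1| |p.2 - q.2| := le_max_right _ _
      _ ≤ (L : ℝ) * max |p.1 - q.1| |p.2 - q.2| := by
          nlinarith [le_max_left (1:ℝ) (|ω| + 2*c), hLcoe,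
            abs_nonneg (p.1 - q.1), abs_nonneg (p.2 - q.2),
            le_max_left |p.1 - q.1| |p.2 - q.2|, le_max_right |p.1 - q.1| |p.2 - q.2|]
    · have e1 : ω*p.1 - p.1^2 - (ω*q.1 - q.1^2) = (ω - (p.1 + q.1)) * (p.1 - q.1) := by ring
      rw [e1, abs_mul]
      have e2 : |ω - (p.1 + q.1)| ≤ |ω| + 2*c := by
        calc |ω - (p.1 + q.1)| ≤ |ω| + |p.1 + q.1| := abs_sub _ _
        _ ≤ |ω| + 2*c := by
            have hb1 : 0 < b := h₂
            have : |p.1 + q.1| ≤ 2*c := by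
              rw [abs_le]
              constructor
              · nlinarith [hp1.1, hq1.1, hp1.2, hq1.2]
              · nlinarith [hp1.2, hq1.2]
            linarith
      calc |ω - (p.1 + q.1)| * |p.1 - q.1| ≤ (|ω| + 2*c) * |p.1 - q.1| :=
            mul_le_mul_of_nonneg_right e2 (abs_nonneg _)
      _ ≤ (L:ℝ) * max |p.1 - q.1| |p.2 - q.2| := by
          rw [hLcoe]
          have h3 : |p.1 - q.1| ≤ max |p.1 - q.1| |p.2 - q.2| := le_max_left _ _
          have h4 : (|ω| + 2*c) ≤ max 1 (|ω| + 2*c) := le_max_right _ _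
          nlinarith [abs_nonneg (p.1 - q.1), abs_nonneg (p.2 - q.2),
            le_max_left (1:ℝ) (|ω| + 2*c)]
  set f : ℝ → ℝ × ℝ := fun t => (ψ t, deriv ψ t) with hf
  have hfd : ∀ t, HasDerivAt f (v t (f t)) t := by
    intro t
    have h := HasDerivAt.prodMk (hd1 t).hasDerivAt (hd2 t).hasDerivAt
    have he : v t (f t) = (deriv ψ t, deriv (deriv ψ) t) := by
      simp only [hv, hf]
      have := hode t
      rw [Prod.mk.injEq]
      exact ⟨rfl, by linarith⟩
    rwa [he]
  have hfmem : ∀ t, f t ∈ K := by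
    intro t
    refine ⟨⟨(hb t).1, (hb t).2⟩, ?_⟩
    have := abs_le.mp (hMb t)
    exact ⟨this.1, this.2⟩
  -- the main symmetric claim for s ≥ 0
  have main : ∀ s, 0 ≤ s → ψ (t₀ + s) = ψ (t₀ - s) := by
    intro s hs
    set g : ℝ → ℝ × ℝ := fun t => (ψ (2*t₀ - t), -deriv ψ (2*t₀ - t)) with hg
    have hgd : ∀ t, HasDerivAt g (v t (g t)) t := by
      intro t
      have hinner : HasDerivAt (fun t : ℝ => 2*t₀ - t) (0 - 1) t :=
        (hasDerivAt_const t (2*t₀)).sub (hasDerivAt_id t)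
      have hA : HasDerivAt (fun t : ℝ => ψ (2*t₀ - t))
          (deriv ψ (2*t₀ - t) * (0 - 1)) t :=
        ((hd1 (2*t₀ - t)).hasDerivAt).comp t hinner
      have hB : HasDerivAt (fun t : ℝ => -deriv ψ (2*t₀ - t))
          (-(deriv (deriv ψ) (2*t₀ - t) * (0 - 1))) t :=
        (((hd2 (2*t₀ - t)).hasDerivAt).comp t hinner).neg
      have h := HasDerivAt.prodMk hA hB
      have he : v t (g t) = (deriv ψ (2*t₀ - t) * (0 - 1),
          -(deriv (deriv ψ) (2*t₀ - t) * (0 - 1))) := by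
        simp only [hv, hg]
        have := hode (2*t₀ - t)
        rw [Prod.mk.injEq]
        exact ⟨by ring, by linarith⟩
      rwa [he]
    have hgmem : ∀ t, g t ∈ K := by
      intro t
      refine ⟨⟨(hb _).1, (hb _).2⟩, ?_⟩
      have := abs_le.mp (hMb (2*t₀ - t))
      rw [Set.mem_Icc]
      constructor <;> simp only [hg] <;> linarith [this.1, this.2]
    have heq0 : f t₀ = g t₀ := by
      simp only [hf, hg]
      rw [Prod.mk.injEq]
      constructor
      · rw [show 2*t₀ - t₀ = t₀ by ring]
      · rw [show 2*t₀ - t₀ = t₀ by ring, hz]; ring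
    have hic : Continuous (fun t : ℝ => 2*t₀ - t) := continuous_const.sub continuous_id
    have := ODE_solution_unique_of_mem_Icc_right (v := v) (s := fun _ => K)
      (f := f) (g := g) (a := t₀) (b := t₀ + s) (fun t _ => hlip t)
      ((hψ.continuous.prodMk hψ'c).continuousOn)
      (fun t _ => (hfd t).hasDerivWithinAt)
      (fun t _ => hfmem t)
      ((((hψ.continuous.comp hic).prodMk
        ((hψ'c.comp hic).neg))).continuousOn)
      (fun t _ => (hgd t).hasDerivWithinAt)
      (fun t _ => hgmem t) heq0 ⟨le_add_of_nonneg_right hs, le_rfl⟩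
    have hfst := congrArg Prod.fst this
    simp only [hf, hg] at hfst
    rw [show 2*t₀ - (t₀ + s) = t₀ - s by ring] at hfst
    exact hfst
  intro s
  rcases le_or_gt 0 s with hs | hs
  · exact main s hs
  · have := main (-s) (by linarith)
    rw [show t₀ + -s = t₀ - s by ring, show t₀ - -s = t₀ + s by ring] at this
    exact this.symm

lemma mainthm (h₁ : a < 0) (h₂ : 0 < b) (h₃ : b < c)
    (hsum : a * b + a * c + b * c = 0)
    (hω : ω = 2 / 3 * (a + b + c))
    (hk : k ∈ Set.Ioo (0 : ℝ) 1) (hk2 : k ^ 2 = (c - b) / (c - a))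
    (hψ : ContDiff ℝ 2 ψ)
    (hode : ∀ x, deriv (deriv ψ) x - ω * ψ x + ψ x ^ 2 = 0)
    (h0 : ψ 0 = c) (h0' : deriv ψ 0 = 0) :
    (∀ x, b ≤ ψ x ∧ ψ x ≤ c) ∧
      IsLeast {T : ℝ | 0 < T ∧ Function.Periodic ψ T}
        (2 * Real.sqrt 6 * ellipticK k / Real.sqrt (c - a)) := by
  have hE := energy hψ hode h0 h0' hsum hω
  have hb := bounds h₁ h₂ h₃ hψ.continuous h0 hE
  obtain ⟨hHpos, hψH, hψ'H, hneg⟩ := halfperiod h₁ h₂ h₃ hk hk2 hψ hode h0 h0' hsum hω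
  set H := Fn a b c b with hH
  have heven : ∀ s, ψ s = ψ (-s) := by
    intro s
    have := reflect h₁ h₂ h₃ hψ hode hb hE h0' s
    rw [zero_add, zero_sub] at this
    exact this
  have hrefH : ∀ s, ψ (H + s) = ψ (H - s) :=
    reflect h₁ h₂ h₃ hψ hode hb hE hψ'H
  have hper : Function.Periodic ψ (2*H) := by
    intro x
    have e1 : x + 2*H = H + (x + H) := by ring
    have e2 : H - (x + H) = -x := by ring
    rw [e1, hrefH (x + H), e2, ← heven x]
  have hanti : StrictAntiOn ψ (Icc 0 H) := by
    apply strictAntiOn_of_deriv_neg (convex_Icc _ _) (hψ.continuous.continuousOn)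
    intro x hx
    rw [interior_Icc] at hx
    exact hneg x hx
  have hval : 2 * Real.sqrt 6 * ellipticK k / Real.sqrt (c - a) = 2*H := by
    rw [hH, Fn_val h₁ h₂ h₃ hk hk2, div_eq_mul_inv]
    ring
  refine ⟨hb, ?_⟩
  rw [hval]
  constructor
  · exact ⟨by linarith, hper⟩
  · rintro T' ⟨hT'pos, hT'per⟩
    by_contra hlt
    push_neg at hlt
    have hTc : ψ T' = c := by
      have := hT'per 0
      rw [zero_add, h0] at this
      exact this
    rcases le_or_gt T' H with hcase | hcase
    · have := hanti (Set.left_mem_Icc.mpr hHpos.le) ⟨hT'pos.le, hcase⟩ hT'pos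
      rw [h0, hTc] at this
      exact lt_irrefl c this
    · have e1 : T' = H + (T' - H) := by ring
      have e2 : H - (T' - H) = 2*H - T' := by ring
      have hs0 : 0 < 2*H - T' := by linarith
      have hsH : 2*H - T' < H := by linarith
      have hval2 : ψ T' = ψ (2*H - T') := by
        conv_lhs => rw [e1]
        rw [hrefH (T' - H), e2]
      have := hanti (Set.left_mem_Icc.mpr hHpos.le) ⟨hs0.le, hsH.le⟩ hs0
      rw [h0, ← hval2, hTc] at this
      exact lt_irrefl c this

end CN


/-- The cnoidal-wave solution of `ψ'' − ωψ + ψ² = 0` determined by the roots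
`β₁ < 0 < β₂ < β₃` (with `Σ βᵢβⱼ = 0`, `ω = (2/3)Σβᵢ`) and initial data `ψ(0) = β₃`,
`ψ'(0) = 0` satisfies `β₂ ≤ ψ ≤ β₃` and has fundamental (least positive) period
`T = 2√6 K(k)/√(β₃ − β₁)`, where `k² = (β₃ − β₂)/(β₃ − β₁)`. -/
theorem stmt_5 (β₁ β₂ β₃ ω k : ℝ) (ψ : ℝ → ℝ)
    (h₁ : β₁ < 0) (h₂ : 0 < β₂) (h₃ : β₂ < β₃)
    (hsum : β₁ * β₂ + β₁ * β₃ + β₂ * β₃ = 0)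
    (hω : ω = 2 / 3 * (β₁ + β₂ + β₃))
    (hk : k ∈ Set.Ioo (0 : ℝ) 1) (hk2 : k ^ 2 = (β₃ - β₂) / (β₃ - β₁))
    (hψ : ContDiff ℝ 2 ψ)
    (hode : ∀ x, deriv (deriv ψ) x - ω * ψ x + ψ x ^ 2 = 0)
    (h0 : ψ 0 = β₃) (h0' : deriv ψ 0 = 0) :
    (∀ x, β₂ ≤ ψ x ∧ ψ x ≤ β₃) ∧
      IsLeast {T : ℝ | 0 < T ∧ Function.Periodic ψ T}
        (2 * Real.sqrt 6 * ellipticK k / Real.sqrt (β₃ - β₁)) :=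
  mainthm h₁ h₂ h₃ hsum hω hk hk2 hψ hode h0 h0'
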